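/- arXiv:2202.07459 — 7 statements merged into one kernel-verified Lean document; each statement's English description precedes it below -/
import Mathlib

section
/- If R is a 2-torsion free semiprime ring and f : R → R is an additive map such that [f(x), x] lies in the center Z(R) for all x in R, then [f(x), x] = 0 for all x in R. -/
/-!
Write `c = [f x, x]`, central by hypothesis. Linearizing at `x` and `x²` makes
`B = [f x, x²] + [f (x²), x]` central, while centrality of `c` gives `[f x, x²] = 2cx`.
Hence `[f (x²), x²] = 2Bx - 4cx²`; this is central, so commuting it with `f x` yields
`Bc = 4c²x`, and commuting once more with `f x` yields `4c³ = 0`. Thus `c` is a central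
nilpotent, and a semiprime ring has no nonzero central nilpotents.
-/

section

variable {R : Type*} [Ring R]

theorem eq_zero_of_mem_center_of_mul_self_eq_zero
    (hsemiprime : ∀ a : R, (∀ x : R, a * x * a = 0) → a = 0) {c : R}
    (hc : c ∈ Set.center R) (hcc : c * c = 0) : c = 0 :=
  hsemiprime c fun x => by
    rw [mul_assoc, Semigroup.mem_center_iff.mp hc x, ← mul_assoc, hcc, zero_mul]

theorem eq_zero_of_isNilpotent_of_mem_center
    (hsemiprime : ∀ a : R, (∀ x : R, a * x * a = 0) → a = 0) {c : R}
    (hc : c ∈ Set.center R) (hnil : IsNilpotent c) : c = 0 := by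
  obtain ⟨n, hn⟩ := hnil
  suffices ∀ k, c ^ (k + 1) = 0 → c = 0 from this n (pow_eq_zero_of_le n.le_succ hn)
  intro k
  induction k with
  | zero => simp
  | succ k ih =>
    intro hk
    refine ih (eq_zero_of_mem_center_of_mul_self_eq_zero hsemiprime
      ((Submonoid.center R).pow_mem hc _) ?_)
    rw [← pow_add]
    exact pow_eq_zero_of_le (by omega) hk

theorem commutator_pow_three_eq_zero (htorsion : ∀ x : R, x + x = 0 → x = 0) {a h x : R}
    (hc : a * x - x * a ∈ Set.center R)
    (hB : (a * (x * x) - x * x * a) + (h * x - x * h) ∈ Set.center R)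
    (hC : h * (x * x) - x * x * h ∈ Set.center R) :
    (a * x - x * a) ^ 3 = 0 := by
  have two_mul_cancel (y : R) (hy : 2 * y = 0) : y = 0 := htorsion y (by rwa [← two_mul])
  set c := a * x - x * a with hc_def
  set B := (a * (x * x) - x * x * a) + (h * x - x * h) with hB_def
  have hc' := Semigroup.mem_center_iff.mp hc
  have hB' := Semigroup.mem_center_iff.mp hB
  have hax2 : a * (x * x) - x * x * a = 2 * (c * x) := by
    linear_combination (norm := noncomm_ring) -(hc_def * x) - x * hc_def + hc' x
  have hhx2 : h * (x * x) - x * x * h = 2 * (B * x) - 4 * (c * (x * x)) := by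
    linear_combination (norm := noncomm_ring)
      (-hB_def - hax2) * x + x * (-hB_def - hax2) + hB' x - 2 * (hc' x * x)
  have hBc : B * c = 4 * (c * (c * x)) := by
    refine sub_eq_zero.mp (two_mul_cancel _ ?_)
    linear_combination (norm := noncomm_ring) Semigroup.mem_center_iff.mp hC a
      - (a * hhx2 - hhx2 * a) + 2 * (B * hc_def) - 2 * (hB' a * x) + 4 * (c * hax2)
      + 4 * (hc' a * (x * x))
  refine two_mul_cancel _ (two_mul_cancel _ ?_)
  linear_combination (norm := noncomm_ring) -(a * hBc - hBc * a) + hB' a * c + B * hc' a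
    - 4 * (c * hc' a * x) - 4 * (hc' a * (c * x)) + 4 * (c * c * hc_def)
end

/-- If `R` is a 2-torsion free semiprime ring and `f : R → R` is an additive map
such that `[f x, x]` is central for all `x`, then `[f x, x] = 0` for all `x`. -/
theorem centralizing_additive_map_is_commuting
    {R : Type*} [Ring R]
    (hsemiprime : ∀ a : R, (∀ x : R, a * x * a = 0) → a = 0)
    (htorsion : ∀ x : R, x + x = 0 → x = 0)
    (f : R → R) (hadd : ∀ x y : R, f (x + y) = f x + f y)
    (hcent : ∀ x : R, f x * x - x * f x ∈ Set.center R) :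
    ∀ x : R, f x * x - x * f x = 0 := by
  intro x
  have hB : (f x * (x * x) - x * x * f x) + (f (x * x) * x - x * f (x * x)) ∈ Set.center R := by
    have : _ ∈ Set.center R := (Subring.center R).sub_mem
      ((Subring.center R).sub_mem (hcent (x + x * x)) (hcent x)) (hcent (x * x))
    convert this using 1
    rw [hadd]
    noncomm_ring
  exact eq_zero_of_isNilpotent_of_mem_center hsemiprime (hcent x)
    ⟨3, commutator_pow_three_eq_zero htorsion (hcent x) hB (hcent (x * x))⟩
end

section
/- Let R be a semiprime ring and a ∈ R a fixed element such that a[x,y] = 0 for all x, y in R. Then there exists an ideal I of R with a ∈ I ⊆ Z(R). -/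
/-!
From `a * [x, y] = 0` one gets `a * u * [a, x] = 0` for every `u`, hence `[a, x] * r * [a, x] = 0`
for every `r`, so semiprimeness forces `a` to be central. The central elements that annihilate all
commutators form a two-sided ideal, and `a` lies in it.
-/

section Ring

variable {R : Type*} [Ring R]

theorem mul_mul_commutator_self_eq_zero {a : R} (ha : ∀ x y : R, a * (x * y - y * x) = 0)
    (u x : R) : a * u * (a * x - x * a) = 0 := by
  have swap : ∀ x y : R, a * (x * y) = a * (y * x) := fun x y =>
    sub_eq_zero.mp (by rw [← mul_sub]; exact ha x y)
  calc a * u * (a * x - x * a)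
      = a * (u * a * x) - a * (u * x * a) := by noncomm_ring
    _ = a * (x * (u * a)) - a * (a * (u * x)) := by rw [swap (u * a) x, swap (u * x) a]
    _ = a * (x * u * a) - a * (a * (u * x)) := by noncomm_ring
    _ = a * (a * (x * u)) - a * (a * (u * x)) := by rw [swap (x * u) a]
    _ = a * (a * (x * u - u * x)) := by noncomm_ring
    _ = 0 := by rw [ha x u, mul_zero]

theorem commutator_mul_mul_eq_zero_of_forall_mul_mul_eq_zero {a c : R}
    (h : ∀ u : R, a * u * c = 0) (x r : R) : (a * x - x * a) * r * c = 0 := by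
  calc (a * x - x * a) * r * c = a * (x * r) * c - x * (a * r * c) := by noncomm_ring
    _ = 0 := by rw [h, h, mul_zero, sub_zero]

theorem mem_center_of_mul_commutator_eq_zero
    (hsemiprime : ∀ b : R, (∀ x : R, b * x * b = 0) → b = 0)
    {a : R} (ha : ∀ x y : R, a * (x * y - y * x) = 0) : a ∈ Set.center R := by
  refine Semigroup.mem_center_iff.mpr fun x => (sub_eq_zero.mp (hsemiprime _ fun r => ?_)).symm
  exact commutator_mul_mul_eq_zero_of_forall_mul_mul_eq_zero
    (mul_mul_commutator_self_eq_zero ha · x) x r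

theorem mul_mem_center_of_mul_commutator_eq_zero {z : R} (hz : z ∈ Set.center R)
    (hz' : ∀ x y : R, z * (x * y - y * x) = 0) (x : R) : x * z ∈ Set.center R := by
  refine Semigroup.mem_center_iff.mpr fun g => ?_
  have hgx : (g * x - x * g) * z = 0 := by
    rw [Semigroup.mem_center_iff.mp hz]
    exact hz' g x
  calc g * (x * z) = g * x * z := (mul_assoc g x z).symm
    _ = x * g * z := sub_eq_zero.mp (by rw [← sub_mul]; exact hgx)
    _ = x * z * g := by rw [mul_assoc, mul_assoc, Semigroup.mem_center_iff.mp hz g]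

variable (R) in
def TwoSidedIdeal.centralCommutatorAnnihilator : TwoSidedIdeal R :=
  .mk' {z | z ∈ Set.center R ∧ ∀ x y : R, z * (x * y - y * x) = 0}
    ⟨Set.zero_mem_center, fun _ _ => zero_mul _⟩
    (fun ⟨hx, hx'⟩ ⟨hy, hy'⟩ =>
      ⟨Set.add_mem_center hx hy, fun u v => by rw [add_mul, hx', hy', add_zero]⟩)
    (fun ⟨hx, hx'⟩ => ⟨Set.neg_mem_center hx, fun u v => by rw [neg_mul, hx', neg_zero]⟩)
    (fun {x _} ⟨hy, hy'⟩ =>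
      ⟨mul_mem_center_of_mul_commutator_eq_zero hy hy' x,
        fun u v => by rw [mul_assoc, hy', mul_zero]⟩)
    (fun {x y} ⟨hx, hx'⟩ => by
      rw [← Semigroup.mem_center_iff.mp hx y]
      exact ⟨mul_mem_center_of_mul_commutator_eq_zero hx hx' y,
        fun u v => by rw [mul_assoc, hx', mul_zero]⟩)

theorem TwoSidedIdeal.mem_centralCommutatorAnnihilator {z : R} :
    z ∈ centralCommutatorAnnihilator R ↔
      z ∈ Set.center R ∧ ∀ x y : R, z * (x * y - y * x) = 0 :=
  mem_mk' ..

end Ring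

/-- If `R` is semiprime and `a * [x,y] = 0` for all `x y`, then there is an ideal
`I` of `R` with `a ∈ I ⊆ Z(R)`. -/
theorem mem_central_ideal_of_annihilates_commutators
    {R : Type*} [Ring R]
    (hsemiprime : ∀ b : R, (∀ x : R, b * x * b = 0) → b = 0)
    (a : R) (ha : ∀ x y : R, a * (x * y - y * x) = 0) :
    ∃ I : TwoSidedIdeal R, a ∈ I ∧ (∀ x : R, x ∈ I → x ∈ Set.center R) := by
  open TwoSidedIdeal in
  exact ⟨centralCommutatorAnnihilator R,
    mem_centralCommutatorAnnihilator.mpr ⟨mem_center_of_mul_commutator_eq_zero hsemiprime ha, ha⟩,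
    fun _ hx => (mem_centralCommutatorAnnihilator.mp hx).1⟩
end

section
/- Let R be a 2-torsion free ring with no nonzero central ideal. If δ : R → R is a centrally extended Jordan derivation, i.e., δ(x+y) − δ(x) − δ(y) ∈ Z(R) and δ(x∘y) − δ(x)∘y − x∘δ(y) ∈ Z(R) for all x, y ∈ R (where x∘y = xy + yx), then δ is additive. -/
/-!
Write `c = δ(x + y) - δ x - δ y`. Expanding `δ((x + y) ∘ z) = δ(x ∘ z + y ∘ z)` in two ways shows
that `c ∘ z` is central for every `z`; as `c` is itself central, `c ∘ z = (2c) z`. Thus `2c` is a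
central element with `2c R ⊆ Z(R)`, so the ideal `2c R` is central, hence zero, and `c = 0` by
2-torsion freeness.
-/

section

variable {R : Type*} [Ring R]

theorem eq_zero_of_mem_center_of_forall_mul_mem_center
    (hnocentral : ∀ I : TwoSidedIdeal R, (∀ x ∈ I, x ∈ Set.center R) → ∀ x ∈ I, x = 0)
    {c : R} (hc : c ∈ Set.center R) (hcR : ∀ z, c * z ∈ Set.center R) : c = 0 := by
  refine hnocentral (TwoSidedIdeal.span {c}) (fun x hx => ?_) c (TwoSidedIdeal.subset_span rfl)
  obtain ⟨s, rfl⟩ : ∃ s, x = c * s := by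
    induction hx using TwoSidedIdeal.span_induction with
    | mem x hx => exact ⟨1, by rw [hx, mul_one]⟩
    | zero => exact ⟨0, (mul_zero c).symm⟩
    | add x y _ _ hx hy =>
      obtain ⟨s, rfl⟩ := hx
      obtain ⟨t, rfl⟩ := hy
      exact ⟨s + t, (mul_add c s t).symm⟩
    | neg x _ hx =>
      obtain ⟨s, rfl⟩ := hx
      exact ⟨-s, (mul_neg c s).symm⟩
    | left_absorb a x _ hx =>
      obtain ⟨s, rfl⟩ := hx
      exact ⟨a * s, by rw [← mul_assoc, ← (hc.comm a).eq, mul_assoc]⟩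
    | right_absorb b x _ hx =>
      obtain ⟨s, rfl⟩ := hx
      exact ⟨s * b, mul_assoc c s b⟩
  exact hcR s

def additivityDefect (δ : R → R) (x y : R) : R := δ (x + y) - δ x - δ y

theorem additivityDefect_mul_add_mul_mem_center {δ : R → R}
    (hA : ∀ x y : R, additivityDefect δ x y ∈ Set.center R)
    (hB : ∀ x y : R, δ (x * y + y * x) - (δ x * y + y * δ x) - (x * δ y + δ y * x)
      ∈ Set.center R) (x y z : R) :
    additivityDefect δ x y * z + z * additivityDefect δ x y ∈ Set.center R := by
  have hxy := hB (x + y) z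
  rw [show (x + y) * z + z * (x + y) = (x * z + z * x) + (y * z + z * y) by noncomm_ring] at hxy
  have hsum := Set.add_mem_center
    (Set.add_mem_center (hA (x * z + z * x) (y * z + z * y)) (hB x z)) (hB y z)
  convert Set.add_mem_center hsum (Set.neg_mem_center hxy) using 1
  simp only [additivityDefect]
  noncomm_ring

end

/-- A centrally extended Jordan derivation on a 2-torsion free ring with no
nonzero central ideal is additive. -/
theorem ce_jordan_derivation_additive_of_no_central_ideal
    {R : Type*} [Ring R]
    (htorsion : ∀ x : R, x + x = 0 → x = 0)
    (hnocentral : ∀ I : TwoSidedIdeal R, (∀ x : R, x ∈ I → x ∈ Set.center R) →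
      ∀ x : R, x ∈ I → x = 0)
    (δ : R → R)
    (hA : ∀ x y : R, δ (x + y) - δ x - δ y ∈ Set.center R)
    (hB : ∀ x y : R, δ (x * y + y * x) - (δ x * y + y * δ x) - (x * δ y + δ y * x)
      ∈ Set.center R) :
    ∀ x y : R, δ (x + y) = δ x + δ y := by
  intro x y
  have hc : additivityDefect δ x y ∈ Set.center R := hA x y
  have h2c : additivityDefect δ x y + additivityDefect δ x y = 0 := by
    refine eq_zero_of_mem_center_of_forall_mul_mem_center hnocentral
      (Set.add_mem_center hc hc) fun z => ?_
    rw [add_mul]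
    nth_rewrite 2 [(hc.comm z).eq]
    exact additivityDefect_mul_add_mul_mem_center hA hB x y z
  rw [← sub_eq_zero, ← sub_sub]
  exact htorsion _ h2c
end

section
/- Let R be a 2-torsion free noncommutative prime ring. Every centrally extended Jordan derivation δ : R → R (i.e., δ(x+y) − δ(x) − δ(y) ∈ Z(R) and δ(x∘y) − δ(x)∘y − x∘δ(y) ∈ Z(R) for all x, y) is additive. -/
/-!
Let `c = δ (x + y) - δ x - δ y`, which is central. Expanding `δ ((x + y) ∘ z)` in two ways shows
that `c ∘ z = 2 c z` is central for every `z`, so `2 c [z, w] = 0`, hence `c [z, w] = 0` as `R` is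
2-torsion free. Since `c` is central, `c R [z, w] = 0`, and primeness with a non-vanishing
commutator forces `c = 0`.
-/

namespace Set

variable {R : Type*} [Ring R]

theorem mul_commutator_eq_zero_of_mem_center (htorsion : ∀ x : R, x + x = 0 → x = 0)
    {c : R} (hc : c ∈ center R) (hjordan : ∀ z, c * z + z * c ∈ center R) (z w : R) :
    c * (z * w - w * z) = 0 := by
  have hc' := Semigroup.mem_center_iff.mp hc
  have hdouble : ∀ z, c * z + z * c = (c + c) * z := fun z => by rw [hc' z, add_mul]
  have hcomm : (c + c) * z * w = (c + c) * w * z := by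
    rw [← hdouble, ← (Semigroup.mem_center_iff.mp (hjordan z) w), hdouble, ← mul_assoc,
      ← Semigroup.mem_center_iff.mp (add_mem_center hc hc) w]
  apply htorsion
  rw [← add_mul, mul_sub, ← mul_assoc, ← mul_assoc, hcomm, sub_self]

theorem eq_zero_of_mem_center_of_mul_eq_zero
    (hprime : ∀ a b : R, (∀ x : R, a * x * b = 0) → a = 0 ∨ b = 0)
    {c u : R} (hc : c ∈ center R) (hcu : c * u = 0) (hu : u ≠ 0) : c = 0 :=
  (hprime c u fun r => by
    rw [← Semigroup.mem_center_iff.mp hc r, mul_assoc, hcu, mul_zero]).resolve_right hu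

end Set

section CentrallyExtended

variable {R : Type*} [Ring R] {δ : R → R}

theorem additivity_defect_jordan_mem_center
    (hA : ∀ x y : R, δ (x + y) - δ x - δ y ∈ Set.center R)
    (hB : ∀ x y : R, δ (x * y + y * x) - (δ x * y + y * δ x) - (x * δ y + δ y * x)
      ∈ Set.center R) (x y z : R) :
    (δ (x + y) - δ x - δ y) * z + z * (δ (x + y) - δ x - δ y) ∈ Set.center R := by
  have hxy := hB (x + y) z
  rw [show (x + y) * z + z * (x + y) = (x * z + z * x) + (y * z + z * y) by noncomm_ring] at hxy
  have hexpand : (δ (x + y) - δ x - δ y) * z + z * (δ (x + y) - δ x - δ y) =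
      (δ (x * z + z * x) - (δ x * z + z * δ x) - (x * δ z + δ z * x)) +
      (δ (y * z + z * y) - (δ y * z + z * δ y) - (y * δ z + δ z * y)) +
      (δ (x * z + z * x + (y * z + z * y)) - δ (x * z + z * x) - δ (y * z + z * y)) -
      (δ (x * z + z * x + (y * z + z * y)) - (δ (x + y) * z + z * δ (x + y)) -
        ((x + y) * δ z + δ z * (x + y))) := by
    noncomm_ring
  rw [hexpand]
  exact sub_mem (show _ ∈ Subring.center R from
    add_mem (add_mem (hB x z) (hB y z)) (hA _ _)) hxy

end CentrallyExtended

/-- A centrally extended Jordan derivation on a 2-torsion free noncommutative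
prime ring is additive. -/
theorem ce_jordan_derivation_additive_of_prime
    {R : Type*} [Ring R]
    (hprime : ∀ a b : R, (∀ x : R, a * x * b = 0) → a = 0 ∨ b = 0)
    (hnoncomm : ¬ (∀ x y : R, x * y = y * x))
    (htorsion : ∀ x : R, x + x = 0 → x = 0)
    (δ : R → R)
    (hA : ∀ x y : R, δ (x + y) - δ x - δ y ∈ Set.center R)
    (hB : ∀ x y : R, δ (x * y + y * x) - (δ x * y + y * δ x) - (x * δ y + δ y * x)
      ∈ Set.center R) :
    ∀ x y : R, δ (x + y) = δ x + δ y := by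
  intro x y
  obtain ⟨z, w, hzw⟩ : ∃ z w : R, z * w ≠ w * z := by simpa using hnoncomm
  have hdefect : δ (x + y) - δ x - δ y = 0 :=
    Set.eq_zero_of_mem_center_of_mul_eq_zero hprime (hA x y)
      (Set.mul_commutator_eq_zero_of_mem_center htorsion (hA x y)
        (additivity_defect_jordan_mem_center hA hB x y) z w)
      (sub_ne_zero.mpr hzw)
  rwa [sub_sub, sub_eq_zero] at hdefect
end

section
/- Let R be a prime ring with extended centroid C. If an additive map F : R → R is commuting on R (i.e., [F(x), x] = 0 for all x ∈ R), then there exist λ ∈ C and an additive map ξ : R → C such that F(x) = λx + ξ(x) for all x ∈ R. -/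
/-!
Linearizing `[F x, x] = 0` gives `[F s, t] = [s, F t]`, from which
`[v, x] t [u, F y] = [v, F x] t [u, y]` follows for all `x y u v t`. If `R` is commutative take
`λ = 0`. Otherwise fix `a = [w, x] ≠ 0` and `b = [w, F x]`: the identity gives `a t b = b t a`,
so by primeness `∑ xᵢ a yᵢ ↦ ∑ xᵢ b yᵢ` is a well-defined right `R`-linear map on the dense
ideal `R a R`. It is left multiplication by some `λ ∈ Q`, central because the map is also left
`R`-linear, and `b = λ a`. The identity then reads `a R ([u, F y] - λ [u, y]) = 0`, so
`[u, F y] = λ [u, y]`: the values of `F - λ` commute with `R`, i.e. lie in `C`.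
-/

/-- `J` is a dense right ideal of `R`. -/
def IsDenseRightIdeal {R : Type*} [Ring R] (J : Set R) : Prop :=
  (0 : R) ∈ J ∧ (∀ a ∈ J, ∀ b ∈ J, a + b ∈ J) ∧ (∀ a ∈ J, ∀ r : R, a * r ∈ J) ∧
    (∀ a b : R, a ≠ 0 → ∃ r : R, a * r ≠ 0 ∧ b * r ∈ J)

def IsPrimeRing (R : Type*) [Ring R] : Prop :=
  ∀ a b : R, (∀ x : R, a * x * b = 0) → a = 0 ∨ b = 0

def IsRightQuotientEmbedding {R Q : Type*} [Ring R] [Ring Q] (ι : R →+* Q) : Prop :=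
  Function.Injective ι ∧ ∀ q : Q, ∃ J : Set R, IsDenseRightIdeal J ∧
    (∀ j ∈ J, ∃ r : R, q * ι j = ι r) ∧ (q ≠ 0 → ∃ j ∈ J, q * ι j ≠ 0)

/-- With `IsRightQuotientEmbedding ι`, this makes `Q` the maximal right ring of quotients of `R`,
whose center is the extended centroid. -/
def RealizesDenseRightHoms {R Q : Type*} [Ring R] [Ring Q] (ι : R →+* Q) : Prop :=
  ∀ J : Set R, IsDenseRightIdeal J →
    ∀ f : R → R, (∀ a ∈ J, ∀ b ∈ J, f (a + b) = f a + f b) →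
      (∀ a ∈ J, ∀ r : R, f (a * r) = f a * r) →
      ∃ q : Q, ∀ j ∈ J, ι (f j) = q * ι j

section Commuting

variable {R : Type*} [Ring R] {F : R → R}

theorem lie_apply_eq_lie_apply_of_commuting (hadd : ∀ x y : R, F (x + y) = F x + F y)
    (hcomm : ∀ x : R, F x * x = x * F x) (s t : R) : ⁅F s, t⁆ = ⁅s, F t⁆ := by
  have h := hcomm (s + t)
  rw [hadd] at h
  rw [Ring.lie_def, Ring.lie_def, ← sub_eq_zero]
  calc _ = ((F s + F t) * (s + t) - (s + t) * (F s + F t))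
        - (F s * s - s * F s) - (F t * t - t * F t) := by noncomm_ring
    _ = 0 := by rw [h, hcomm s, hcomm t]; simp only [sub_self]

theorem lie_mul_lie_apply_eq (h : ∀ s t : R, ⁅F s, t⁆ = ⁅s, F t⁆) (x y u v t : R) :
    ⁅v, x⁆ * t * ⁅u, F y⁆ = ⁅v, F x⁆ * t * ⁅u, y⁆ := by
  have leibniz : ∀ t, ⁅F (x * y), t⁆ = x * ⁅F y, t⁆ + ⁅F x, t⁆ * y := fun t => by
    rw [h, h, h]
    simp only [Ring.lie_def]
    noncomm_ring
  have expand : ⁅v, x⁆ * t * ⁅u, F y⁆ - ⁅v, F x⁆ * t * ⁅u, y⁆ =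
      v * (⁅F (x * y), t * u⁆ - (x * ⁅F y, t * u⁆ + ⁅F x, t * u⁆ * y))
        - v * (⁅F (x * y), t⁆ - (x * ⁅F y, t⁆ + ⁅F x, t⁆ * y)) * u
        - (⁅F (x * y), v * t * u⁆ - (x * ⁅F y, v * t * u⁆ + ⁅F x, v * t * u⁆ * y))
        + (⁅F (x * y), v * t⁆ - (x * ⁅F y, v * t⁆ + ⁅F x, v * t⁆ * y)) * u := by
    simp only [Ring.lie_def]
    noncomm_ring
  simpa only [leibniz, sub_self, mul_zero, zero_mul, sub_zero, add_zero, sub_eq_zero] using expand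

end Commuting

namespace IsRightQuotientEmbedding

variable {R Q : Type*} [Ring R] [Ring Q] {ι : R →+* Q}

theorem exists_mul_eq_ne_zero (hι : IsRightQuotientEmbedding ι) {q : Q} (hq : q ≠ 0) :
    ∃ j r : R, r ≠ 0 ∧ q * ι j = ι r := by
  obtain ⟨J, -, hmap, hfaithful⟩ := hι.2 q
  obtain ⟨j, hj, hqj⟩ := hfaithful hq
  obtain ⟨r, hr⟩ := hmap j hj
  exact ⟨j, r, by rintro rfl; exact hqj (by rw [hr, map_zero]), hr⟩

theorem eq_zero_of_mul_eq_zero (hι : IsRightQuotientEmbedding ι) {J : Set R}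
    (hJ : IsDenseRightIdeal J) {z : Q} (hz : ∀ j ∈ J, z * ι j = 0) : z = 0 := by
  by_contra hz0
  obtain ⟨j, r, hr0, hr⟩ := hι.exists_mul_eq_ne_zero hz0
  obtain ⟨s, hrs, hjs⟩ := hJ.2.2.2 r j hr0
  apply hrs (hι.1 _)
  rw [map_zero, map_mul, ← hr, mul_assoc, ← map_mul, hz _ hjs]

theorem mem_center_of_commute (hι : IsRightQuotientEmbedding ι) {z : Q}
    (hz : ∀ r : R, z * ι r = ι r * z) : z ∈ Set.center Q := by
  refine Semigroup.mem_center_iff.mpr fun q => (sub_eq_zero.mp ?_).symm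
  obtain ⟨J, hJ, hmap, -⟩ := hι.2 q
  refine hι.eq_zero_of_mul_eq_zero hJ fun j hj => ?_
  obtain ⟨r, hr⟩ := hmap j hj
  rw [sub_mul, mul_assoc, hr, hz, ← hr, mul_assoc, ← hz, mul_assoc, sub_self]

theorem eq_zero_of_mul_mul_eq_zero (hι : IsRightQuotientEmbedding ι) (hR : IsPrimeRing R)
    {a e : Q} (h : ∀ t : R, a * ι t * e = 0) (ha : a ≠ 0) : e = 0 := by
  by_contra he
  obtain ⟨j, r, hr0, hr⟩ := hι.exists_mul_eq_ne_zero ha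
  obtain ⟨k, s, hs0, hs⟩ := hι.exists_mul_eq_ne_zero he
  refine (hR r s fun t => hι.1 ?_).elim hr0 hs0
  calc ι (r * t * s) = a * ι (j * t) * e * ι k := by
        simp only [map_mul, ← hr, ← hs, mul_assoc]
    _ = ι 0 := by rw [h, zero_mul, map_zero]

end IsRightQuotientEmbedding

section Graph

variable {R Q : Type*} [Ring R] [Ring Q] {ι : R →+* Q}

theorem isDenseRightIdeal_graph_domain {G : AddSubgroup (R × R)}
    (hright : ∀ p ∈ G, ∀ r : R, p * (r, r) ∈ G)
    (hdense : ∀ u v : R, u ≠ 0 → ∃ r : R, u * r ≠ 0 ∧ ∃ w, (v * r, w) ∈ G) :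
    IsDenseRightIdeal {z : R | ∃ w, (z, w) ∈ G} :=
  ⟨⟨0, G.zero_mem⟩, fun _ ⟨w, hw⟩ _ ⟨w', hw'⟩ => ⟨w + w', G.add_mem hw hw'⟩,
    fun _ ⟨w, hw⟩ r => ⟨w * r, hright _ hw r⟩, hdense⟩

theorem RealizesDenseRightHoms.exists_mul_eq_of_graph (hmax : RealizesDenseRightHoms ι)
    {G : AddSubgroup (R × R)} (hfun : ∀ w : R, (0, w) ∈ G → w = 0)
    (hright : ∀ p ∈ G, ∀ r : R, p * (r, r) ∈ G)
    (hdense : ∀ u v : R, u ≠ 0 → ∃ r : R, u * r ≠ 0 ∧ ∃ w, (v * r, w) ∈ G) :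
    ∃ q : Q, ∀ p ∈ G, ι p.2 = q * ι p.1 := by
  classical
  let g : R → R := fun z => if h : ∃ w, (z, w) ∈ G then h.choose else 0
  have hg : ∀ z w : R, (z, w) ∈ G → g z = w := fun z w hzw => by
    have hex : ∃ w, (z, w) ∈ G := ⟨w, hzw⟩
    simp only [g, dif_pos hex]
    exact sub_eq_zero.mp (hfun _ (by simpa using G.sub_mem hex.choose_spec hzw))
  obtain ⟨q, hq⟩ := hmax _ (isDenseRightIdeal_graph_domain hright hdense) g
    (fun _ ⟨w, hw⟩ _ ⟨w', hw'⟩ => by rw [hg _ _ hw, hg _ _ hw', hg _ _ (G.add_mem hw hw')])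
    (fun _ ⟨w, hw⟩ r => by rw [hg _ _ hw, hg _ _ (hright _ hw r)])
  exact ⟨q, fun p hp => by rw [← hg p.1 p.2 hp]; exact hq _ ⟨_, hp⟩⟩

theorem IsRightQuotientEmbedding.exists_central_mul_eq_of_graph
    (hι : IsRightQuotientEmbedding ι) (hmax : RealizesDenseRightHoms ι)
    {G : AddSubgroup (R × R)} (hfun : ∀ w : R, (0, w) ∈ G → w = 0)
    (hright : ∀ p ∈ G, ∀ r : R, p * (r, r) ∈ G) (hleft : ∀ p ∈ G, ∀ u : R, (u, u) * p ∈ G)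
    (hdense : ∀ u v : R, u ≠ 0 → ∃ r : R, u * r ≠ 0 ∧ ∃ w, (v * r, w) ∈ G) :
    ∃ q ∈ Set.center Q, ∀ p ∈ G, ι p.2 = q * ι p.1 := by
  obtain ⟨q, hq⟩ := hmax.exists_mul_eq_of_graph hfun hright hdense
  refine ⟨q, hι.mem_center_of_commute fun u => sub_eq_zero.mp ?_, hq⟩
  refine hι.eq_zero_of_mul_eq_zero (isDenseRightIdeal_graph_domain hright hdense)
    fun z ⟨w, hw⟩ => ?_
  have hzw : ι w = q * ι z := hq _ hw
  have huzw : ι (u * w) = q * ι (u * z) := hq _ (hleft _ hw u)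
  rw [sub_mul, mul_assoc, ← map_mul, ← huzw, map_mul, mul_assoc, ← hzw, sub_self]

theorem IsRightQuotientEmbedding.exists_central_eq_mul_of_mul_mul_comm
    (hι : IsRightQuotientEmbedding ι) (hmax : RealizesDenseRightHoms ι) (hR : IsPrimeRing R)
    {a b : R} (hab : ∀ x : R, a * x * b = b * x * a) (ha : a ≠ 0) :
    ∃ lam ∈ Set.center Q, ι b = lam * ι a := by
  let G := AddSubgroup.closure {p : R × R | ∃ x y : R, p = (x * a * y, x * b * y)}
  have hgen : ∀ x y : R, (x * a * y, x * b * y) ∈ G := fun x y =>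
    AddSubgroup.subset_closure ⟨x, y, rfl⟩
  have hstable : ∀ φ : R × R →+ R × R, (∀ x y : R, ∃ x' y' : R,
      φ (x * a * y, x * b * y) = (x' * a * y', x' * b * y')) → ∀ p ∈ G, φ p ∈ G := by
    intro φ hφ p hp
    have hle : G.map φ ≤ G := by
      rw [AddMonoidHom.map_closure, AddSubgroup.closure_le]
      rintro _ ⟨_, ⟨x, y, rfl⟩, rfl⟩
      obtain ⟨x', y', h⟩ := hφ x y
      rw [SetLike.mem_coe, h]
      exact hgen x' y'
    exact hle ⟨p, hp, rfl⟩
  have hright : ∀ p ∈ G, ∀ r : R, p * (r, r) ∈ G := fun p hp r =>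
    hstable (AddMonoidHom.mulRight (r, r)) (fun x y => ⟨x, y * r, by simp [mul_assoc]⟩) p hp
  have hleft : ∀ p ∈ G, ∀ u : R, (u, u) * p ∈ G := fun p hp u =>
    hstable (AddMonoidHom.mulLeft (u, u)) (fun x y => ⟨u * x, y, by simp [mul_assoc]⟩) p hp
  -- with primeness, this makes `∑ xᵢ a yᵢ ↦ ∑ xᵢ b yᵢ` well defined
  have hbal : ∀ p ∈ G, ∀ u : R, a * u * p.2 = b * u * p.1 := by
    intro p hp
    induction hp using AddSubgroup.closure_induction with
    | mem _ hp =>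
      obtain ⟨x, y, rfl⟩ := hp
      intro u
      calc a * u * (x * b * y) = a * (u * x) * b * y := by noncomm_ring
        _ = b * (u * x) * a * y := by rw [hab]
        _ = b * u * (x * a * y) := by noncomm_ring
    | zero => simp
    | add p q _ _ hp hq => intro u; simp [mul_add, hp u, hq u]
    | neg p _ hp => intro u; simp [hp u]
  have hfun : ∀ w : R, (0, w) ∈ G → w = 0 := fun w hw =>
    (hR a w fun u => by simpa using hbal _ hw u).resolve_left ha
  have hdense : ∀ u v : R, u ≠ 0 → ∃ r : R, u * r ≠ 0 ∧ ∃ w, (v * r, w) ∈ G := by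
    intro u v hu
    obtain ⟨x, hx⟩ : ∃ x, u * x * a ≠ 0 := by
      by_contra! h
      exact ha ((hR u a h).resolve_left hu)
    exact ⟨x * a, by rwa [← mul_assoc], v * x * b, by simpa [mul_assoc] using hgen (v * x) 1⟩
  obtain ⟨lam, hlam, h⟩ := hι.exists_central_mul_eq_of_graph hmax hfun hright hleft hdense
  exact ⟨lam, hlam, by simpa using h _ (hgen 1 1)⟩

end Graph

theorem IsRightQuotientEmbedding.exists_central_lie_apply_eq {R Q : Type*} [Ring R] [Ring Q]
    {ι : R →+* Q} (hι : IsRightQuotientEmbedding ι) (hmax : RealizesDenseRightHoms ι)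
    (hR : IsPrimeRing R) {F : R → R} (h : ∀ s t : R, ⁅F s, t⁆ = ⁅s, F t⁆) :
    ∃ lam ∈ Set.center Q, ∀ x r : R, ι ⁅r, F x⁆ = lam * ι ⁅r, x⁆ := by
  by_cases hc : ∀ x r : R, ⁅r, x⁆ = 0
  · exact ⟨0, Set.zero_mem_center, fun x r => by simp [hc]⟩
  push Not at hc
  obtain ⟨x₀, w₀, ha⟩ := hc
  obtain ⟨lam, hlam, hba⟩ := hι.exists_central_eq_mul_of_mul_mul_comm hmax hR
    (lie_mul_lie_apply_eq h x₀ x₀ w₀ w₀) ha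
  refine ⟨lam, hlam, fun y u => sub_eq_zero.mp <| hι.eq_zero_of_mul_mul_eq_zero hR
    (a := ι ⁅w₀, x₀⁆) (fun t => ?_) ((map_ne_zero_iff _ hι.1).mpr ha)⟩
  have hcomm := Semigroup.mem_center_iff.mp hlam (ι ⁅w₀, x₀⁆ * ι t)
  rw [mul_sub, ← map_mul, ← map_mul, lie_mul_lie_apply_eq h x₀ y u w₀ t]
  simp only [map_mul, hba]
  rw [← mul_assoc (ι ⁅w₀, x₀⁆ * ι t), hcomm]
  simp only [mul_assoc, sub_self]

/-- Brešar's theorem: if `F` is an additive commuting map on a prime ring `R`,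
then there exist `λ` in the extended centroid `C` (the center of the maximal
right ring of quotients `Q` of `R`) and an additive map `ξ : R → C` with
`F x = λ x + ξ x` for all `x`.  Here `Q` is axiomatized as a maximal right ring
of quotients of `R` via the embedding `ι`. -/
theorem commuting_additive_map_structure
    {R Q : Type*} [Ring R] [Ring Q] (ι : R →+* Q)
    (hinj : Function.Injective ι)
    -- every element of `Q` is a "fraction": it multiplies some dense right ideal of `R` into `R`,
    -- faithfully if nonzero
    (hquot : ∀ q : Q, ∃ J : Set R, IsDenseRightIdeal J ∧
      (∀ j ∈ J, ∃ r : R, q * ι j = ι r) ∧ (q ≠ 0 → ∃ j ∈ J, q * ι j ≠ 0))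
    -- maximality: every right `R`-module map from a dense right ideal into `R`
    -- is realized by left multiplication by an element of `Q`
    (hmax : ∀ J : Set R, IsDenseRightIdeal J →
      ∀ f : R → R, (∀ a ∈ J, ∀ b ∈ J, f (a + b) = f a + f b) →
        (∀ a ∈ J, ∀ r : R, f (a * r) = f a * r) →
        ∃ q : Q, ∀ j ∈ J, ι (f j) = q * ι j)
    (hprime : ∀ a b : R, (∀ x : R, a * x * b = 0) → a = 0 ∨ b = 0)
    (F : R → R) (hadd : ∀ x y : R, F (x + y) = F x + F y)
    (hcomm : ∀ x : R, F x * x = x * F x) :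
    ∃ lam : Q, lam ∈ Set.center Q ∧
      ∃ ξ : R → Q, (∀ x : R, ξ x ∈ Set.center Q) ∧
        (∀ x y : R, ξ (x + y) = ξ x + ξ y) ∧
        (∀ x : R, ι (F x) = lam * ι x + ξ x) := by
  have hι : IsRightQuotientEmbedding ι := ⟨hinj, hquot⟩
  obtain ⟨lam, hlam, hlie⟩ := hι.exists_central_lie_apply_eq hmax hprime
    (lie_apply_eq_lie_apply_of_commuting hadd hcomm)
  refine ⟨lam, hlam, fun x => ι (F x) - lam * ι x, fun x => ?_, fun x y => ?_, fun x => ?_⟩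
  · refine hι.mem_center_of_commute fun r => sub_eq_zero.mp ?_
    have h := hlie x r
    simp only [Ring.lie_def, map_sub, map_mul] at h
    calc _ = -(ι r * ι (F x) - ι (F x) * ι r - lam * (ι r * ι x - ι x * ι r))
          + (ι r * lam - lam * ι r) * ι x := by noncomm_ring
      _ = 0 := by
        rw [h, Semigroup.mem_center_iff.mp hlam (ι r)]
        simp only [sub_self, neg_zero, zero_mul, add_zero]
  · simp only [hadd, map_add, mul_add]
    abel
  · simp
end

section
/- If R is a semiprime ring with involution *, then the center of the subring generated by the symmetric elements of R is contained in the center of R. -/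
/-!
Let `T` be the subring generated by the symmetric elements and `a ∈ T` central in `T`. For every
`y` the commutator `⁅a, y⁆` commutes with all symmetric elements, hence with `T`, and has square
zero: the identity `⁅a, y⁆ t y* = y t ⁅a, y⁆` holds for symmetric `t` because `a` commutes with
`y t y*`, it propagates to all of `T`, and at `t = a` it gives `⁅a, y⁆² = 0`.

In a semiprime ring a symmetric square-zero element commuting with all symmetric elements
vanishes. Applied to `x + x*` this makes every commutator `⁅a, y⁆` skew; since commutators
anticommute, a product of three of them is symmetric, hence zero. By the Leibniz rule for
`⁅a, -⁆` semiprimeness then kills products of two commutators, and finally the commutators.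
-/

def IsSemiprimeRing (R : Type*) [Ring R] : Prop :=
  ∀ a : R, (∀ x : R, a * x * a = 0) → a = 0

section StarRing

variable {R : Type*} [Ring R] [StarRing R]

theorem commute_of_mem_closure_selfAdjoint {x t : R}
    (hx : ∀ u : R, IsSelfAdjoint u → Commute x u)
    (ht : t ∈ Subring.closure {u : R | IsSelfAdjoint u}) : Commute x t := by
  have hcent : Subring.closure {u : R | IsSelfAdjoint u} ≤ Subring.centralizer {x} :=
    Subring.closure_le.mpr fun u hu => Subring.mem_centralizer_iff.mpr fun _ hx' =>
      (Set.mem_singleton_iff.mp hx') ▸ hx u hu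
  exact Subring.mem_centralizer_iff.mp (hcent ht) x rfl

theorem commute_lie_of_commute_selfAdjoint {b : R}
    (hb : ∀ u : R, IsSelfAdjoint u → Commute b u) (y : R) {u : R} (hu : IsSelfAdjoint u) :
    Commute ⁅b, y⁆ u := by
  have hyu : IsSelfAdjoint (y * u + u * star y) := by
    simpa [star_mul, hu.star_eq] using IsSelfAdjoint.add_star_self (y * u)
  rw [commute_iff_lie_eq]
  calc ⁅⁅b, y⁆, u⁆
      = ⁅b, y * u + u * star y⁆ - y * ⁅b, u⁆ - ⁅b, u⁆ * star y - u * ⁅b, y + star y⁆ := by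
        simp only [Ring.lie_def]; noncomm_ring
    _ = 0 := by
      rw [(hb _ hyu).lie_eq, (hb u hu).lie_eq, (hb _ (.add_star_self y)).lie_eq]
      simp

theorem commute_lie_of_mem_closure_selfAdjoint {b : R}
    (hb : ∀ u : R, IsSelfAdjoint u → Commute b u) (y : R) {t : R}
    (ht : t ∈ Subring.closure {u : R | IsSelfAdjoint u}) : Commute ⁅b, y⁆ t :=
  commute_of_mem_closure_selfAdjoint (fun _ => commute_lie_of_commute_selfAdjoint hb y) ht

theorem lie_mul_mul_star_eq {b : R} (hb : ∀ u : R, IsSelfAdjoint u → Commute b u) (y : R)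
    {t : R} (ht : t ∈ Subring.closure {u : R | IsSelfAdjoint u}) :
    ⁅b, y⁆ * t * star y = y * t * ⁅b, y⁆ := by
  have hsa (u : R) (hu : IsSelfAdjoint u) : ⁅b, y⁆ * u * star y = y * u * ⁅b, y⁆ := by
    have hyuy : IsSelfAdjoint (y * u * star y) := hu.conjugate y
    rw [← sub_eq_zero]
    calc ⁅b, y⁆ * u * star y - y * u * ⁅b, y⁆
        = ⁅b, y * u * star y⁆ - y * ⁅b, u⁆ * star y - y * u * ⁅b, y + star y⁆ := by
          simp only [Ring.lie_def]; noncomm_ring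
      _ = 0 := by
        rw [(hb _ hyuy).lie_eq, (hb u hu).lie_eq, (hb _ (.add_star_self y)).lie_eq]
        simp
  have hone : ⁅b, y⁆ * star y = y * ⁅b, y⁆ := by
    simpa using hsa 1 (.one R)
  induction ht using Subring.closure_induction with
  | mem u hu => exact hsa u hu
  | zero => simp
  | one => simpa using hone
  | add t₁ t₂ _ _ ih₁ ih₂ => simp only [mul_add, add_mul, ih₁, ih₂]
  | neg t _ ih => simp only [mul_neg, neg_mul, ih]
  | mul t₁ t₂ h₁ h₂ ih₁ ih₂ =>
    have c₁ := (commute_lie_of_mem_closure_selfAdjoint hb y h₁).eq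
    have c₂ := (commute_lie_of_mem_closure_selfAdjoint hb y h₂).eq
    calc ⁅b, y⁆ * (t₁ * t₂) * star y = t₁ * (⁅b, y⁆ * t₂ * star y) := by
          rw [← mul_assoc, c₁]; simp only [mul_assoc]
      _ = t₁ * (⁅b, y⁆ * star y) * t₂ := by
          rw [ih₂, mul_assoc y, ← c₂, hone]; simp only [mul_assoc]
      _ = ⁅b, y⁆ * t₁ * star y * t₂ := by rw [c₁]; simp only [mul_assoc]
      _ = y * (t₁ * t₂) * ⁅b, y⁆ := by
          rw [ih₁]; simp only [mul_assoc, c₂]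

theorem lie_mul_self_eq_zero {b : R} (hbT : b ∈ Subring.closure {u : R | IsSelfAdjoint u})
    (hb : ∀ u : R, IsSelfAdjoint u → Commute b u) (y : R) : ⁅b, y⁆ * ⁅b, y⁆ = 0 := by
  have hcb := commute_lie_of_mem_closure_selfAdjoint hb y hbT
  have hone : ⁅b, y⁆ * star y = y * ⁅b, y⁆ := by
    simpa using lie_mul_mul_star_eq hb y (Subring.one_mem _)
  calc ⁅b, y⁆ * ⁅b, y⁆ = (b * y - y * b) * ⁅b, y⁆ := rfl
    _ = b * (y * ⁅b, y⁆) - y * b * ⁅b, y⁆ := by noncomm_ring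
    _ = ⁅b, y⁆ * b * star y - y * b * ⁅b, y⁆ := by rw [← hone, ← mul_assoc, ← hcb.eq]
    _ = 0 := by rw [lie_mul_mul_star_eq hb y hbT, sub_self]

namespace IsSemiprimeRing

theorem eq_zero_of_isSelfAdjoint_of_mul_self_eq_zero (hR : IsSemiprimeRing R) {w : R}
    (hw : IsSelfAdjoint w) (hw2 : w * w = 0) (hcomm : ∀ u : R, IsSelfAdjoint u → Commute w u) :
    w = 0 := by
  have hkill : ∀ p : R, IsSelfAdjoint p → w * p * w = 0 := fun p hp => by
    rw [(hcomm p hp).eq, mul_assoc, hw2, mul_zero]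
  refine hR w fun v => hR _ fun u => ?_
  have h₁ : w * (v * w * u + star u * w * star v) * w = 0 := by
    simpa [star_mul, hw.star_eq, mul_assoc] using hkill _ (.add_star_self (v * w * u))
  calc w * v * w * u * (w * v * w)
      = w * (v * w * u + star u * w * star v) * w * (v * w)
        - w * star u * (w * (star v * w * v) * w) := by noncomm_ring
    _ = 0 := by rw [h₁, hkill _ (hw.conjugate' v)]; simp

theorem mul_star_self_eq_zero (hR : IsSemiprimeRing R) {x : R} (hx2 : x * x = 0)
    (hcomm : ∀ u : R, IsSelfAdjoint u → Commute x u) : x * star x = 0 := by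
  have key : ∀ v : R, x * star x * v * x = 0 := fun v => by
    have hp := hcomm _ (.add_star_self (star v * x))
    calc x * star x * v * x
        = x * (star v * x + star (star v * x)) * x - x * star v * (x * x) := by
          simp only [star_mul, star_star]; noncomm_ring
      _ = 0 := by rw [hp.eq, mul_assoc _ x, hx2]; simp
  exact hR _ fun v => by rw [← mul_assoc, key, zero_mul]

theorem star_eq_neg_of_mul_self_eq_zero (hR : IsSemiprimeRing R) {x : R} (hx2 : x * x = 0)
    (hcomm : ∀ u : R, IsSelfAdjoint u → Commute x u) : star x = -x := by
  have hcomm' : ∀ u : R, IsSelfAdjoint u → Commute (star x) u := fun u hu => by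
    simpa [hu.star_eq] using (hcomm u hu).star_star
  have hx2' : star x * star x = 0 := by rw [← star_mul, hx2, star_zero]
  have hsq : (x + star x) * (x + star x) = 0 := by
    have h' := hR.mul_star_self_eq_zero hx2' hcomm'
    rw [star_star] at h'
    rw [add_mul, mul_add, mul_add, hx2, hx2', hR.mul_star_self_eq_zero hx2 hcomm, h']
    simp
  exact eq_neg_of_add_eq_zero_right <| hR.eq_zero_of_isSelfAdjoint_of_mul_self_eq_zero
    (.add_star_self x) hsq fun u hu => (hcomm u hu).add_left (hcomm' u hu)

theorem lie_mul_lie_mul_lie_eq_zero (hR : IsSemiprimeRing R) {a : R}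
    (haT : a ∈ Subring.closure {u : R | IsSelfAdjoint u})
    (ha : ∀ u : R, IsSelfAdjoint u → Commute a u) (u v w : R) :
    ⁅a, u⁆ * ⁅a, v⁆ * ⁅a, w⁆ = 0 := by
  have hcomm := commute_lie_of_commute_selfAdjoint ha
  have hsq := lie_mul_self_eq_zero haT ha
  have hskew (z : R) : star ⁅a, z⁆ = -⁅a, z⁆ :=
    hR.star_eq_neg_of_mul_self_eq_zero (hsq z) fun _ => hcomm z
  have hanti (y z : R) : ⁅a, y⁆ * ⁅a, z⁆ = -(⁅a, z⁆ * ⁅a, y⁆) := by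
    refine eq_neg_of_add_eq_zero_left ?_
    calc ⁅a, y⁆ * ⁅a, z⁆ + ⁅a, z⁆ * ⁅a, y⁆
        = ⁅a, y + z⁆ * ⁅a, y + z⁆ - ⁅a, y⁆ * ⁅a, y⁆ - ⁅a, z⁆ * ⁅a, z⁆ := by
          simp only [Ring.lie_def]; noncomm_ring
      _ = 0 := by rw [hsq, hsq, hsq, sub_zero, sub_zero]
  apply hR.eq_zero_of_isSelfAdjoint_of_mul_self_eq_zero
  · calc star (⁅a, u⁆ * ⁅a, v⁆ * ⁅a, w⁆) = -(⁅a, w⁆ * ⁅a, v⁆ * ⁅a, u⁆) := by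
          rw [star_mul, star_mul, hskew, hskew, hskew]; noncomm_ring
      _ = ⁅a, v⁆ * ⁅a, w⁆ * ⁅a, u⁆ := by rw [hanti w v]; noncomm_ring
      _ = -(⁅a, v⁆ * ⁅a, u⁆ * ⁅a, w⁆) := by rw [mul_assoc, hanti w u]; noncomm_ring
      _ = ⁅a, u⁆ * ⁅a, v⁆ * ⁅a, w⁆ := by rw [hanti v u]; noncomm_ring
  · calc ⁅a, u⁆ * ⁅a, v⁆ * ⁅a, w⁆ * (⁅a, u⁆ * ⁅a, v⁆ * ⁅a, w⁆)
        = ⁅a, u⁆ * ⁅a, v⁆ * (⁅a, w⁆ * ⁅a, u⁆) * (⁅a, v⁆ * ⁅a, w⁆) := by noncomm_ring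
      _ = -(⁅a, u⁆ * (⁅a, v⁆ * ⁅a, u⁆) * (⁅a, w⁆ * ⁅a, v⁆ * ⁅a, w⁆)) := by
          rw [hanti w u]; noncomm_ring
      _ = ⁅a, u⁆ * ⁅a, u⁆ * (⁅a, v⁆ * (⁅a, w⁆ * ⁅a, v⁆ * ⁅a, w⁆)) := by
          rw [hanti v u]; noncomm_ring
      _ = 0 := by rw [hsq, zero_mul]
  · exact fun s hs => ((hcomm u hs).mul_left (hcomm v hs)).mul_left (hcomm w hs)

theorem lie_mul_lie_eq_zero (hR : IsSemiprimeRing R) {a : R}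
    (haT : a ∈ Subring.closure {u : R | IsSelfAdjoint u})
    (ha : ∀ u : R, IsSelfAdjoint u → Commute a u) (y z : R) : ⁅a, y⁆ * ⁅a, z⁆ = 0 := by
  have hay : ⁅a, ⁅a, y⁆⁆ = 0 := (commute_lie_of_mem_closure_selfAdjoint ha y haT).symm.lie_eq
  have htriple := hR.lie_mul_lie_mul_lie_eq_zero haT ha
  refine hR _ fun v => ?_
  calc ⁅a, y⁆ * ⁅a, z⁆ * v * (⁅a, y⁆ * ⁅a, z⁆)
      = ⁅a, y⁆ * ⁅a, z * v * ⁅a, y⁆⁆ * ⁅a, z⁆ - ⁅a, y⁆ * z * (⁅a, v⁆ * ⁅a, y⁆ * ⁅a, z⁆)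
        - ⁅a, y⁆ * (z * v * ⁅a, ⁅a, y⁆⁆) * ⁅a, z⁆ := by
        simp only [Ring.lie_def]; noncomm_ring
    _ = 0 := by rw [htriple, htriple, hay]; simp

theorem mem_center_of_mem_closure_selfAdjoint (hR : IsSemiprimeRing R) {a : R}
    (haT : a ∈ Subring.closure {u : R | IsSelfAdjoint u})
    (ha : ∀ u : R, IsSelfAdjoint u → Commute a u) : a ∈ Set.center R := by
  have hlie (z : R) : ⁅a, z⁆ = 0 := hR _ fun v => by
    calc ⁅a, z⁆ * v * ⁅a, z⁆ = ⁅a, z * v⁆ * ⁅a, z⁆ - z * (⁅a, v⁆ * ⁅a, z⁆) := by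
          simp only [Ring.lie_def]; noncomm_ring
      _ = 0 := by rw [hR.lie_mul_lie_eq_zero haT ha, hR.lie_mul_lie_eq_zero haT ha, mul_zero,
          sub_zero]
  exact Semigroup.mem_center_iff.mpr fun g => (commute_iff_lie_eq.mpr (hlie g)).eq.symm

end IsSemiprimeRing

end StarRing

/-- If `R` is a semiprime ring with involution `s`, then the center of the
subring generated by the symmetric elements is contained in `Z(R)`. -/
theorem center_closure_symmetric_subset_center
    {R : Type*} [Ring R]
    (hsemiprime : ∀ a : R, (∀ x : R, a * x * a = 0) → a = 0)
    (s : R → R)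
    (hsadd : ∀ x y : R, s (x + y) = s x + s y)
    (hsmul : ∀ x y : R, s (x * y) = s y * s x)
    (hsinv : ∀ x : R, s (s x) = x) :
    ∀ a ∈ Subring.closure {x : R | s x = x},
      (∀ x ∈ Subring.closure {x : R | s x = x}, a * x = x * a) →
        a ∈ Set.center R := by
  let _ : StarRing R :=
    { star := s, star_involutive := hsinv, star_mul := hsmul, star_add := hsadd }
  intro a haT hacomm
  exact IsSemiprimeRing.mem_center_of_mem_closure_selfAdjoint hsemiprime haT
    fun u hu => hacomm u (Subring.subset_closure hu)
end

section
/- Let R be a 2-torsion free noncommutative prime ring. An additive map δ : R → R is a centrally extended Jordan derivation if and only if δ(x²) − δ(x)x − xδ(x) ∈ Z(R) for all x ∈ R. -/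
/-!
Linearize: for additive `δ`, the Jordan defect of `(x, y)` is the square defect of `x + y` minus those
of `x` and `y`, and the Jordan defect of `(x, x)` is twice the square defect of `x`. So the Jordan
condition gives `2 • (square defect) ∈ Z(R)`, and 2-torsion freeness removes the factor `2`.
-/

section Defects

variable {R : Type*} [Ring R]

def squareDefect (δ : R → R) (x : R) : R :=
  δ (x * x) - δ x * x - x * δ x

def jordanDefect (δ : R → R) (x y : R) : R :=
  δ (x * y + y * x) - (δ x * y + y * δ x) - (x * δ y + δ y * x)

variable {δ : R → R}

theorem jordanDefect_self (hadd : ∀ x y : R, δ (x + y) = δ x + δ y) (x : R) :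
    jordanDefect δ x x = squareDefect δ x + squareDefect δ x := by
  rw [jordanDefect, squareDefect, hadd]
  abel

theorem jordanDefect_eq_squareDefect_add_sub (hadd : ∀ x y : R, δ (x + y) = δ x + δ y)
    (x y : R) :
    jordanDefect δ x y = squareDefect δ (x + y) - squareDefect δ x - squareDefect δ y := by
  have hsq : (x + y) * (x + y) = x * x + (x * y + y * x) + y * y := by noncomm_ring
  simp only [jordanDefect, squareDefect, hsq, hadd]
  noncomm_ring

end Defects

theorem mem_center_of_add_self_mem_center {R : Type*} [Ring R]
    (htorsion : ∀ x : R, x + x = 0 → x = 0) {z : R} (hz : z + z ∈ Set.center R) :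
    z ∈ Set.center R := by
  rw [Semigroup.mem_center_iff] at hz ⊢
  intro g
  have hcomm : (g * z - z * g) + (g * z - z * g) = 0 := by
    rw [sub_add_sub_comm, ← mul_add, ← add_mul, hz g, sub_self]
  exact sub_eq_zero.mp (htorsion _ hcomm)

theorem ce_jordan_derivation_iff_square_condition_general
    {R : Type*} [Ring R]
    (htorsion : ∀ x : R, x + x = 0 → x = 0)
    (δ : R → R) (hadd : ∀ x y : R, δ (x + y) = δ x + δ y) :
    ((∀ x y : R, δ (x + y) - δ x - δ y ∈ Set.center R) ∧
      (∀ x y : R, δ (x * y + y * x) - (δ x * y + y * δ x) - (x * δ y + δ y * x)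
        ∈ Set.center R)) ↔
      (∀ x : R, δ (x * x) - δ x * x - x * δ x ∈ Set.center R) := by
  constructor
  · rintro ⟨-, hjordan⟩ x
    have htwice : squareDefect δ x + squareDefect δ x ∈ Set.center R :=
      jordanDefect_self hadd x ▸ hjordan x x
    exact mem_center_of_add_self_mem_center htorsion htwice
  · intro hsquare
    refine ⟨fun x y => by simp [hadd, Set.zero_mem_center], fun x y => ?_⟩
    show jordanDefect δ x y ∈ (Subring.center R : Set R)
    rw [jordanDefect_eq_squareDefect_add_sub hadd]
    exact sub_mem (sub_mem (hsquare (x + y)) (hsquare x)) (hsquare y)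

/-- On a 2-torsion free noncommutative prime ring, an additive map `δ` is a
centrally extended Jordan derivation iff `δ(x²) − δ(x)x − xδ(x) ∈ Z(R)` for all `x`. -/
theorem ce_jordan_derivation_iff_square_condition
    {R : Type*} [Ring R]
    (hprime : ∀ a b : R, (∀ x : R, a * x * b = 0) → a = 0 ∨ b = 0)
    (hnoncomm : ¬ (∀ x y : R, x * y = y * x))
    (htorsion : ∀ x : R, x + x = 0 → x = 0)
    (δ : R → R) (hadd : ∀ x y : R, δ (x + y) = δ x + δ y) :
    ((∀ x y : R, δ (x + y) - δ x - δ y ∈ Set.center R) ∧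
      (∀ x y : R, δ (x * y + y * x) - (δ x * y + y * δ x) - (x * δ y + δ y * x)
        ∈ Set.center R)) ↔
      (∀ x : R, δ (x * x) - δ x * x - x * δ x ∈ Set.center R) :=
  ce_jordan_derivation_iff_square_condition_general htorsion δ hadd
end
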